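/- arXiv:0902.4065 — 2 statements merged into one kernel-verified Lean document; each statement's English description precedes it below -/
import Mathlib

section
/- Let $k$ be a field of characteristic 0 and consider the forms $G_1, \ldots, G_g, F_1, \ldots, F_{g-2}$ as algebraically independent linear forms (coordinates). The $(2g-2)$-dimensional linear space $S$ of $(g-n)\times(n+1)$ matrices $\mathcal{A}_F(G)$ with entries $s_{ij} = G_{i+j-1} + (j-1)F_{i+j-2}$ (where $2n \leq g-1$, $F_0 = 0$) is 2-generic: after arbitrary invertible row and column operations, any two of the entries of the transformed matrix are linearly independent. -/
section Stmt5Aux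

open Polynomial

variable {k : Type*} [Field k]

/-- The polynomial with coefficient vector `v`. -/
noncomputable def polyOfVec {m : ℕ} (v : Fin m → k) : k[X] :=
  ∑ q : Fin m, C (v q) * X ^ (q : ℕ)

lemma coeff_polyOfVec {m : ℕ} (v : Fin m → k) (q : Fin m) :
    (polyOfVec v).coeff (q : ℕ) = v q := by
  rw [polyOfVec, finset_sum_coeff, Finset.sum_eq_single q]
  · simp [coeff_C_mul, coeff_X_pow]
  · intro q' _ hq'
    have hne : ((q : ℕ) = (q' : ℕ)) = False := by
      simp only [eq_iff_iff, iff_false]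
      exact fun h => hq' (Fin.val_injective h.symm)
    simp [coeff_C_mul, coeff_X_pow, hne]
  · simp

lemma polyOfVec_eq_zero {m : ℕ} {v : Fin m → k} (h : polyOfVec v = 0) : ∀ q, v q = 0 :=
  fun q => by rw [← coeff_polyOfVec v q, h, coeff_zero]

lemma coeff_mul_polyOfVec {r m : ℕ} (a : Fin r → k) (b : Fin m → k) (t : ℕ) :
    (polyOfVec a * polyOfVec b).coeff t
      = ∑ p : Fin r, ∑ q : Fin m, if (p : ℕ) + (q : ℕ) = t then a p * b q else 0 := by
  rw [polyOfVec, polyOfVec, Finset.sum_mul_sum, finset_sum_coeff]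
  refine Finset.sum_congr rfl fun p _ => ?_
  rw [finset_sum_coeff]
  refine Finset.sum_congr rfl fun q _ => ?_
  rw [mul_mul_mul_comm, ← C_mul, ← pow_add, coeff_C_mul, coeff_X_pow,
    mul_ite, mul_one, mul_zero]
  exact if_congr eq_comm rfl rfl

lemma X_mul_derivative_polyOfVec {m : ℕ} (v : Fin m → k) :
    X * derivative (polyOfVec v) = polyOfVec (fun q => ((q : ℕ) : k) * v q) := by
  rw [polyOfVec, polyOfVec, derivative_sum, Finset.mul_sum]
  refine Finset.sum_congr rfl fun q _ => ?_
  rw [derivative_C_mul_X_pow]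
  rcases Nat.eq_zero_or_pos (q : ℕ) with h0 | hpos
  · rw [h0]; simp
  · obtain ⟨t, ht⟩ := Nat.exists_eq_succ_of_ne_zero (Nat.pos_iff_ne_zero.mp hpos)
    rw [ht]
    simp only [Nat.add_sub_cancel, Nat.succ_eq_add_one]
    rw [mul_comm (v q)]
    push_cast
    ring

/-- Wronskian zero implies linear dependence over a char-zero field. -/
lemma wronskian_zero_dep [CharZero k] {W W' : k[X]} (h : wronskian W W' = 0) :
    ∃ a b : k, (a ≠ 0 ∨ b ≠ 0) ∧ C a * W + C b * W' = 0 := by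
  classical
  letI : GCDMonoid k[X] := EuclideanDomain.gcdMonoid _
  by_cases hW : W = 0
  · exact ⟨1, 0, Or.inl one_ne_zero, by simp [hW]⟩
  by_cases hW' : W' = 0
  · exact ⟨0, 1, Or.inr one_ne_zero, by simp [hW']⟩
  set d := GCDMonoid.gcd W W' with hd
  have hdne : d ≠ 0 := gcd_ne_zero_of_left hW
  have h1 : d * (W / d) = W := EuclideanDomain.mul_div_cancel' hdne (gcd_dvd_left W W')
  have h2 : d * (W' / d) = W' := EuclideanDomain.mul_div_cancel' hdne (gcd_dvd_right W W')
  have hco : IsCoprime (W / d) (W' / d) := isCoprime_div_gcd_div_gcd hW'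
  have hwr : wronskian (W / d) (W' / d) = 0 := by
    have expand : wronskian W W' = d * d * wronskian (W / d) (W' / d) := by
      conv_lhs => rw [← h1, ← h2]
      simp only [wronskian, derivative_mul]
      ring
    rw [expand] at h
    rcases mul_eq_zero.mp h with h0 | h0
    · exact absurd h0 (mul_ne_zero hdne hdne)
    · exact h0
  obtain ⟨hda, hdb⟩ := hco.wronskian_eq_zero_iff.mp hwr
  set a₀ := (W / d).coeff 0 with ha₀
  set b₀ := (W' / d).coeff 0 with hb₀
  have ha : W / d = C a₀ := eq_C_of_derivative_eq_zero hda
  have hb : W' / d = C b₀ := eq_C_of_derivative_eq_zero hdb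
  refine ⟨b₀, -a₀, Or.inr ?_, ?_⟩
  · intro h0
    rw [neg_eq_zero] at h0
    exact left_div_gcd_ne_zero hW (by rw [ha, h0, map_zero])
  · rw [map_neg, ← h1, ← h2, ha, hb]
    ring

lemma keyPoly [CharZero k] {U U' W W' : k[X]}
    (hind : ∀ a b : k, C a * U + C b * U' = 0 → a = 0 ∧ b = 0)
    (h1 : U * W + U' * W' = 0)
    (h2 : U * (X * derivative W) + U' * (X * derivative W') = 0) :
    W = 0 ∧ W' = 0 := by
  have hU : U ≠ 0 := fun h0 => one_ne_zero (hind 1 0 (by simp [h0])).1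
  have hU' : U' ≠ 0 := fun h0 => one_ne_zero (hind 0 1 (by simp [h0])).2
  have hw : wronskian W W' = 0 := by
    have key : U * (X * wronskian W W') = 0 := by
      simp only [wronskian]
      linear_combination (X * derivative W') * h1 - W' * h2
    rcases mul_eq_zero.mp key with h0 | h0
    · exact absurd h0 hU
    rcases mul_eq_zero.mp h0 with h0 | h0
    · exact absurd h0 X_ne_zero
    · exact h0
  obtain ⟨a, b, hab, hdep⟩ := wronskian_zero_dep hw
  rcases hab with ha | hb
  · have hW' : W' = 0 := by
      have key : (C (-b) * U + C a * U') * W' = 0 := by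
        rw [map_neg]
        linear_combination C a * h1 - U * hdep
      rcases mul_eq_zero.mp key with h0 | h0
      · exact absurd (hind _ _ h0).2 ha
      · exact h0
    refine ⟨?_, hW'⟩
    have hUW : U * W = 0 := by rw [hW'] at h1; simpa using h1
    rcases mul_eq_zero.mp hUW with h0 | h0
    · exact absurd h0 hU
    · exact h0
  · have hW : W = 0 := by
      have key : (C b * U + C (-a) * U') * W = 0 := by
        rw [map_neg]
        linear_combination C b * h1 - U' * hdep
      rcases mul_eq_zero.mp key with h0 | h0
      · exact absurd (hind _ _ h0).1 hb
      · exact h0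
    refine ⟨hW, ?_⟩
    have hUW : U' * W' = 0 := by rw [hW] at h1; simpa using h1
    rcases mul_eq_zero.mp hUW with h0 | h0
    · exact absurd h0 hU'
    · exact h0

lemma units_row_indep {r : ℕ} {A : Matrix (Fin r) (Fin r) k} (hA : IsUnit A)
    (y : Fin r → k) (h : ∀ p, ∑ i, y i * A i p = 0) : y = 0 := by
  have h' : Matrix.vecMul y A = 0 := funext fun p => by
    simpa [Matrix.vecMul, dotProduct] using h p
  have hAdet := (Matrix.isUnit_iff_isUnit_det A).mp hA
  calc y = Matrix.vecMul y (A * A⁻¹) := by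
        rw [Matrix.mul_nonsing_inv A hAdet, Matrix.vecMul_one]
    _ = Matrix.vecMul (Matrix.vecMul y A) A⁻¹ := by rw [Matrix.vecMul_vecMul]
    _ = 0 := by rw [h', Matrix.zero_vecMul]

lemma units_col_indep {m : ℕ} {B : Matrix (Fin m) (Fin m) k} (hB : IsUnit B)
    (y : Fin m → k) (h : ∀ q, ∑ j, B q j * y j = 0) : y = 0 := by
  have h' : Matrix.mulVec B y = 0 := funext fun q => by
    simpa [Matrix.mulVec, dotProduct] using h q
  have hBdet := (Matrix.isUnit_iff_isUnit_det B).mp hB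
  calc y = Matrix.mulVec (B⁻¹ * B) y := by
        rw [Matrix.nonsing_inv_mul B hBdet, Matrix.one_mulVec]
    _ = Matrix.mulVec B⁻¹ (Matrix.mulVec B y) := by rw [Matrix.mulVec_mulVec]
    _ = 0 := by rw [h', Matrix.mulVec_zero]

lemma sum_ite_factor {r m : ℕ} (a : Fin r → k) (b : Fin m → k) (c : k) (d : ℕ) :
    (∑ p : Fin r, ∑ q : Fin m, if (p : ℕ) + (q : ℕ) = d then a p * (c * b q) else 0)
      = c * ∑ p : Fin r, ∑ q : Fin m, if (p : ℕ) + (q : ℕ) = d then a p * b q else 0 := by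
  rw [Finset.mul_sum]
  refine Finset.sum_congr rfl fun p _ => ?_
  rw [Finset.mul_sum]
  refine Finset.sum_congr rfl fun q _ => ?_
  split_ifs <;> ring

lemma sum_ite_factor₂ {r m : ℕ} (a : Fin r → k) (b : Fin m → k) (c : k) (d : ℕ) :
    (∑ p : Fin r, ∑ q : Fin m,
        if (p : ℕ) + (q : ℕ) = d then a p * (((q : ℕ) : k) * (c * b q)) else 0)
      = c * ∑ p : Fin r, ∑ q : Fin m,
          if (p : ℕ) + (q : ℕ) = d then ((q : ℕ) : k) * (a p * b q) else 0 := by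
  rw [Finset.mul_sum]
  refine Finset.sum_congr rfl fun p _ => ?_
  rw [Finset.mul_sum]
  refine Finset.sum_congr rfl fun q _ => ?_
  split_ifs <;> ring

end Stmt5Aux

/-- The matrix `𝒜_F(G)` with (1-indexed) entries `s_{ij} = G_{i+j-1} + (j-1) F_{i+j-2}`,
viewed as a function of the point `x = (G, F) ∈ k^ℕ × k^ℕ` (only the coordinates
`G_1, …, G_g` and `F_1, …, F_{g-2}` actually occur; `F` is truncated beyond
index `g - 2`, encoding the convention `F_0 = 0`, `F_m = 0` for `m > g - 2`). -/
def ribbonMatrixAt {k : Type*} [Field k] (g n : ℕ) (x : (ℕ → k) × (ℕ → k)) :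
    Matrix (Fin (g - n)) (Fin (n + 1)) k :=
  Matrix.of fun i j =>
    x.1 (i.1 + j.1 + 1) +
      (j.1 : k) * (if 1 ≤ i.1 + j.1 ∧ i.1 + j.1 ≤ g - 2 then x.2 (i.1 + j.1) else 0)

section Stmt5Entry

variable {k : Type*} [Field k]

lemma entry_G {g n : ℕ} (A : Matrix (Fin (g - n)) (Fin (g - n)) k)
    (B : Matrix (Fin (n + 1)) (Fin (n + 1)) k) (i : Fin (g - n)) (j : Fin (n + 1)) (d : ℕ) :
    (A * ribbonMatrixAt g n (fun t => if t = d + 1 then (1 : k) else 0, 0) * B) i j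
      = ∑ p : Fin (g - n), ∑ q : Fin (n + 1),
          if (p : ℕ) + (q : ℕ) = d then A i p * B q j else 0 := by
  simp only [Matrix.mul_apply, ribbonMatrixAt, Matrix.of_apply, Finset.sum_mul,
    Pi.zero_apply, mul_zero, ite_self, add_zero]
  rw [Finset.sum_comm]
  refine Finset.sum_congr rfl fun p _ => Finset.sum_congr rfl fun q _ => ?_
  simp only [add_left_inj]
  split_ifs with h
  · ring
  · ring

lemma entry_F {g n : ℕ} (A : Matrix (Fin (g - n)) (Fin (g - n)) k)
    (B : Matrix (Fin (n + 1)) (Fin (n + 1)) k) (i : Fin (g - n)) (j : Fin (n + 1)) (m : ℕ)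
    (hm1 : 1 ≤ m) (hm2 : m ≤ g - 2) :
    (A * ribbonMatrixAt g n (0, fun t => if t = m then (1 : k) else 0) * B) i j
      = ∑ p : Fin (g - n), ∑ q : Fin (n + 1),
          if (p : ℕ) + (q : ℕ) = m then ((q : ℕ) : k) * (A i p * B q j) else 0 := by
  simp only [Matrix.mul_apply, ribbonMatrixAt, Matrix.of_apply, Finset.sum_mul,
    Pi.zero_apply, zero_add]
  rw [Finset.sum_comm]
  refine Finset.sum_congr rfl fun p _ => Finset.sum_congr rfl fun q _ => ?_
  by_cases h : (p : ℕ) + (q : ℕ) = m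
  · simp only [h, if_pos, hm1, hm2, and_self, if_true]
    ring
  · simp only [h, if_false]
    simp [h]

end Stmt5Entry

open Polynomial in
/-- regarding `G_1, …, G_g, F_1, …, F_{g-2}` as independent linear
coordinates, the `(2g-2)`-dimensional linear space of matrices `𝒜_F(G)` is
`2`-generic: after arbitrary invertible row and column operations, any two
(distinct) entries of the transformed matrix are linearly independent linear
forms. -/
theorem stmt_5 {k : Type*} [Field k] [CharZero k] (g n : ℕ)
    (hg : 3 ≤ g) (hn : 1 ≤ n) (h2n : 2 * n ≤ g - 1)
    (A : Matrix (Fin (g - n)) (Fin (g - n)) k) (hA : IsUnit A)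
    (B : Matrix (Fin (n + 1)) (Fin (n + 1)) k) (hB : IsUnit B)
    (i₁ i₂ : Fin (g - n)) (j₁ j₂ : Fin (n + 1)) (hne : (i₁, j₁) ≠ (i₂, j₂)) :
    LinearIndependent k
      ![(fun x : (ℕ → k) × (ℕ → k) => (A * ribbonMatrixAt g n x * B) i₁ j₁),
        (fun x : (ℕ → k) × (ℕ → k) => (A * ribbonMatrixAt g n x * B) i₂ j₂)] := by
  classical
  rw [LinearIndependent.pair_iff]
  intro c₁ c₂ hc
  have hx : ∀ x : (ℕ → k) × (ℕ → k),
      c₁ * (A * ribbonMatrixAt g n x * B) i₁ j₁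
        + c₂ * (A * ribbonMatrixAt g n x * B) i₂ j₂ = 0 := fun x => by
    simpa using congrFun hc x
  -- First polynomial identity (from the `G`-coordinates).
  have claim1 : polyOfVec (fun p => A i₁ p) * polyOfVec (fun q => c₁ * B q j₁)
      + polyOfVec (fun p => A i₂ p) * polyOfVec (fun q => c₂ * B q j₂) = 0 := by
    apply Polynomial.ext
    intro d
    rw [coeff_add, coeff_mul_polyOfVec, coeff_mul_polyOfVec, coeff_zero,
      sum_ite_factor (fun p => A i₁ p) (fun q => B q j₁) c₁ d,
      sum_ite_factor (fun p => A i₂ p) (fun q => B q j₂) c₂ d]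
    have hG := hx (fun t => if t = d + 1 then (1 : k) else 0, 0)
    rw [entry_G A B i₁ j₁ d, entry_G A B i₂ j₂ d] at hG
    exact hG
  -- Second polynomial identity (from the `F`-coordinates).
  have claim2 : polyOfVec (fun p => A i₁ p)
        * (X * derivative (polyOfVec (fun q => c₁ * B q j₁)))
      + polyOfVec (fun p => A i₂ p)
        * (X * derivative (polyOfVec (fun q => c₂ * B q j₂))) = 0 := by
    rw [X_mul_derivative_polyOfVec, X_mul_derivative_polyOfVec]
    apply Polynomial.ext
    intro d
    rw [coeff_add, coeff_mul_polyOfVec, coeff_mul_polyOfVec, coeff_zero]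
    by_cases hd : 1 ≤ d ∧ d ≤ g - 2
    · rw [sum_ite_factor₂ (fun p => A i₁ p) (fun q => B q j₁) c₁ d,
        sum_ite_factor₂ (fun p => A i₂ p) (fun q => B q j₂) c₂ d]
      have hF := hx (0, fun t => if t = d then (1 : k) else 0)
      rw [entry_F A B i₁ j₁ d hd.1 hd.2, entry_F A B i₂ j₂ d hd.1 hd.2] at hF
      exact hF
    · by_cases hd0 : d = 0
      · subst hd0
        have z : ∀ (u : Fin (g - n) → k) (w : Fin (n + 1) → k),
            (∑ p : Fin (g - n), ∑ q : Fin (n + 1),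
              if (p : ℕ) + (q : ℕ) = 0 then u p * (((q : ℕ) : k) * w q) else 0) = 0 := by
          intro u w
          refine Finset.sum_eq_zero fun p _ => Finset.sum_eq_zero fun q _ => ?_
          split_ifs with h
          · have hq : (q : ℕ) = 0 := by omega
            rw [hq]; simp
          · rfl
        rw [z (fun p => A i₁ p) (fun q => c₁ * B q j₁),
          z (fun p => A i₂ p) (fun q => c₂ * B q j₂), add_zero]
      · by_cases hdg : d = g - 1
        · subst hdg
          have conv2 : ∀ (u : Fin (g - n) → k) (w : Fin (n + 1) → k),
              (∑ p : Fin (g - n), ∑ q : Fin (n + 1),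
                if (p : ℕ) + (q : ℕ) = g - 1 then u p * (((q : ℕ) : k) * w q) else 0)
              = (n : k) * ∑ p : Fin (g - n), ∑ q : Fin (n + 1),
                  if (p : ℕ) + (q : ℕ) = g - 1 then u p * w q else 0 := by
            intro u w
            rw [Finset.mul_sum]
            refine Finset.sum_congr rfl fun p _ => ?_
            rw [Finset.mul_sum]
            refine Finset.sum_congr rfl fun q _ => ?_
            split_ifs with h
            · have hq : (q : ℕ) = n := by
                have hp := p.isLt
                have hq' := q.isLt
                omega
              rw [hq]; ring
            · ring
          rw [conv2 (fun p => A i₁ p) (fun q => c₁ * B q j₁),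
            conv2 (fun p => A i₂ p) (fun q => c₂ * B q j₂), ← mul_add]
          have h0 := congrArg (fun P => Polynomial.coeff P (g - 1)) claim1
          simp only [coeff_add, coeff_mul_polyOfVec, coeff_zero] at h0
          rw [h0, mul_zero]
        · have hd' : g - 1 < d := by omega
          have z : ∀ (u : Fin (g - n) → k) (w : Fin (n + 1) → k),
              (∑ p : Fin (g - n), ∑ q : Fin (n + 1),
                if (p : ℕ) + (q : ℕ) = d then u p * (((q : ℕ) : k) * w q) else 0) = 0 := by
            intro u w
            refine Finset.sum_eq_zero fun p _ => Finset.sum_eq_zero fun q _ => ?_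
            rw [if_neg]
            have hp := p.isLt
            have hq := q.isLt
            omega
          rw [z (fun p => A i₁ p) (fun q => c₁ * B q j₁),
            z (fun p => A i₂ p) (fun q => c₂ * B q j₂), add_zero]
  by_cases hi : i₁ = i₂
  · -- same row: the two columns must differ
    subst hi
    have hj : j₁ ≠ j₂ := fun h => hne (by rw [h])
    have hU : polyOfVec (fun p => A i₁ p) ≠ 0 := by
      intro h0
      have hrow : ∀ p, A i₁ p = 0 := polyOfVec_eq_zero h0
      have hy := units_row_indep hA (fun i => if i = i₁ then (1 : k) else 0) (fun p => by
        simp only [ite_mul, one_mul, zero_mul, Finset.sum_ite_eq', Finset.mem_univ, if_true]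
        exact hrow p)
      simpa using congrFun hy i₁
    rw [← mul_add] at claim1
    rcases mul_eq_zero.mp claim1 with h0 | h0
    · exact absurd h0 hU
    have hcoeffs : ∀ q : Fin (n + 1), c₁ * B q j₁ + c₂ * B q j₂ = 0 := by
      intro q
      have := congrArg (fun P => Polynomial.coeff P (q : ℕ)) h0
      simpa [coeff_add, coeff_polyOfVec] using this
    have hy := units_col_indep hB
      (fun j => (if j = j₁ then c₁ else 0) + (if j = j₂ then c₂ else 0)) (fun q => by
        simp only [mul_add, mul_ite, mul_zero, Finset.sum_add_distrib,
          Finset.sum_ite_eq', Finset.mem_univ, if_true]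
        linear_combination hcoeffs q)
    constructor
    · simpa [hj] using congrFun hy j₁
    · simpa [Ne.symm hj] using congrFun hy j₂
  · -- different rows: use the key polynomial lemma
    have hind : ∀ a b : k, C a * polyOfVec (fun p => A i₁ p)
        + C b * polyOfVec (fun p => A i₂ p) = 0 → a = 0 ∧ b = 0 := by
      intro a b hab
      have hco : ∀ p : Fin (g - n), a * A i₁ p + b * A i₂ p = 0 := by
        intro p
        have := congrArg (fun P => Polynomial.coeff P (p : ℕ)) hab
        simpa [coeff_add, coeff_C_mul, coeff_polyOfVec] using this
      have hy := units_row_indep hA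
        (fun i => (if i = i₁ then a else 0) + (if i = i₂ then b else 0)) (fun p => by
          simp only [add_mul, ite_mul, zero_mul, Finset.sum_add_distrib,
            Finset.sum_ite_eq', Finset.mem_univ, if_true]
          linear_combination hco p)
      constructor
      · simpa [hi] using congrFun hy i₁
      · simpa [Ne.symm hi] using congrFun hy i₂
    obtain ⟨hW1, hW2⟩ := keyPoly hind claim1 claim2
    have h1 : ∀ q : Fin (n + 1), c₁ * B q j₁ = 0 := polyOfVec_eq_zero hW1
    have h2 : ∀ q : Fin (n + 1), c₂ * B q j₂ = 0 := polyOfVec_eq_zero hW2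
    constructor
    · have hcol := units_col_indep hB (fun j => if j = j₁ then c₁ else 0) (fun q => by
        simp only [mul_ite, mul_zero, Finset.sum_ite_eq', Finset.mem_univ, if_true]
        linear_combination h1 q)
      simpa using congrFun hcol j₁
    · have hcol := units_col_indep hB (fun j => if j = j₂ then c₂ else 0) (fun q => by
        simp only [mul_ite, mul_zero, Finset.sum_ite_eq', Finset.mem_univ, if_true]
        linear_combination h2 q)
      simpa using congrFun hcol j₂
end

section
/- Let $k$ be a field of characteristic 0, $g \geq 3$. Under the change of coordinates $s' = s + p(s)\epsilon$, $t = t' + q(t)\eta$ on the charts $U_1 = \mathrm{Spec}\, k[s,\epsilon]/\epsilon^2$ and $U_2 = \mathrm{Spec}\, k[t,\eta]/\eta^2$ of a ribbon with gluing data $s^{-1} = t + F(t)\eta$, $\epsilon = t^{-g-1}\eta$, the new gluing function is $F(t') + q(t') - t'^{1-g}p(t'^{-1})$; i.e., $s'^{-1} = t' + (F(t') + q(t') - t'^{1-g} p(t'^{-1}))\eta$ holds in $k[t, t^{-1}, \eta]/(\eta^2)$. -/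
open LaurentPolynomial TrivSqZeroExt Polynomial

/-- Evaluation of a Laurent polynomial at a unit `u` of a commutative
`k`-algebra (sending `t ↦ u`, `t⁻¹ ↦ u⁻¹`). -/
noncomputable def laurentEval {k : Type*} [Field k] {R : Type*} [CommRing R]
    [Algebra k R] (u : Rˣ) : LaurentPolynomial k →ₐ[k] R :=
  AddMonoidAlgebra.lift k R ℤ ((Units.coeHom R).comp (zpowersHom Rˣ u))

/-- The unit `t` of `k[t,t⁻¹,η]/(η²) = DualNumber k[t,t⁻¹]`. -/
noncomputable def tUnit (k : Type*) [Field k] : (DualNumber (LaurentPolynomial k))ˣ :=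
  ((LaurentPolynomial.isUnit_T (R := k) 1).map
    (TrivSqZeroExt.inlHom (LaurentPolynomial k) (LaurentPolynomial k))).unit

/-! Lean's `ε = DualNumber.eps` is the paper's `η`. Since `η² = 0`, a multiple `x * η` only
depends on `x` modulo `η`, i.e. on the constant term of `x`. Hence in every `η`-term one may
replace `s` by `t⁻¹` (from `s (t + Fη) = 1`), `t'` by `t`, `t'⁻¹` by `t⁻¹`, and `F(t')` by `F`.
The second factor then becomes `t + Fη - t^{1-g} p(t⁻¹) η`, and multiplying out against
`s + p(t⁻¹) t^{-g-1} η` the two `t^{-g} p(t⁻¹) η` terms cancel, leaving `s (t + Fη) = 1`. -/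

open scoped DualNumber

section LaurentEval

variable {k : Type*} [Field k] {R S : Type*} [CommRing R] [CommRing S] [Algebra k R] [Algebra k S]

theorem laurentEval_T_one (u : Rˣ) : laurentEval (k := k) u (T 1) = u := by
  rw [laurentEval, T, AddMonoidAlgebra.lift_single]
  simp

theorem AlgHom.eq_laurentEval (φ : LaurentPolynomial k →ₐ[k] R) {u : Rˣ}
    (hu : (u : R) = φ (T 1)) : φ = laurentEval u := by
  refine (Equiv.symm_apply_eq _).1 (MonoidHom.ext_mint ?_)
  rw [AddMonoidAlgebra.lift_symm_apply]
  simp [hu]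

theorem AlgHom.map_laurentEval (φ : R →ₐ[k] S) (u : Rˣ) (F : LaurentPolynomial k) :
    φ (laurentEval u F) = laurentEval (Units.map φ u) F :=
  congr($((φ.comp (laurentEval u)).eq_laurentEval (by simp [laurentEval_T_one])) F)

theorem laurentEval_eq_self {u : (LaurentPolynomial k)ˣ} (hu : (u : LaurentPolynomial k) = T 1)
    (F : LaurentPolynomial k) : laurentEval u F = F :=
  congr($((AlgHom.id k _).eq_laurentEval hu) F).symm

end LaurentEval

theorem Units.inv_mul_eq_inv_mul_of_mul_eq_mul {A : Type*} [CommRing A] {u v : Aˣ} {e : A}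
    (h : (u : A) * e = v * e) : (↑u⁻¹ : A) * e = ↑v⁻¹ * e := by
  linear_combination (-(↑u⁻¹ * ↑v⁻¹ : A)) * h - (↑u⁻¹ * e : A) * v.mul_inv +
    (↑v⁻¹ * e : A) * u.mul_inv

namespace DualNumber

theorem mul_eps_eq_mul_eps_iff {R : Type*} [Semiring R] {x y : R[ε]} :
    x * ε = y * ε ↔ x.fst = y.fst := by
  constructor
  · intro h
    simpa using congrArg TrivSqZeroExt.snd h
  · intro h
    ext <;> simp [h]

variable {k R : Type*} [CommSemiring k] [CommSemiring R] [Algebra k R]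

theorem fst_aeval (x : R[ε]) (p : k[X]) : (aeval x p).fst = aeval x.fst p :=
  (aeval_algHom_apply (fstHom k R R) x p).symm

theorem aeval_mul_eps_congr {x y : R[ε]} (h : x * ε = y * ε) (p : k[X]) :
    aeval x p * ε = aeval y p * ε := by
  rw [mul_eps_eq_mul_eps_iff] at h ⊢
  rw [fst_aeval, fst_aeval, h]

end DualNumber

open DualNumber

theorem laurentEval_mul_eps {k : Type*} [Field k] {u : k[T;T⁻¹][ε]ˣ}
    (hu : (u : k[T;T⁻¹][ε]) * ε = (tUnit k : k[T;T⁻¹][ε]) * ε) (F : k[T;T⁻¹]) :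
    laurentEval u F * ε = inl F * ε := by
  rw [mul_eps_eq_mul_eps_iff, ← fstHom_apply (S := k), AlgHom.map_laurentEval,
    laurentEval_eq_self]
  · rfl
  · exact (mul_eps_eq_mul_eps_iff.1 hu).trans rfl

theorem stmt_10_general {k : Type*} [Field k] (g : ℕ) (hg : 3 ≤ g)
    (F : LaurentPolynomial k) (p q : Polynomial k)
    (s : DualNumber (LaurentPolynomial k)) (t' : (DualNumber (LaurentPolynomial k))ˣ)
    -- `s⁻¹ = t + F(t)η`
    (hs : s * ((tUnit k : DualNumber (LaurentPolynomial k)) + inl F * DualNumber.eps) = 1)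
    -- `t = t' + q(t)η`
    (ht : (tUnit k : DualNumber (LaurentPolynomial k)) =
      (t' : DualNumber (LaurentPolynomial k)) +
        Polynomial.aeval (tUnit k : DualNumber (LaurentPolynomial k)) q * DualNumber.eps) :
    -- with `s' = s + p(s)ε` and `ε = t^{-g-1}η`:
    (s + Polynomial.aeval s p *
        ((((tUnit k)⁻¹ : (DualNumber (LaurentPolynomial k))ˣ) :
          DualNumber (LaurentPolynomial k)) ^ (g + 1) * DualNumber.eps)) *
      ((t' : DualNumber (LaurentPolynomial k)) +
        (laurentEval t' F + Polynomial.aeval (t' : DualNumber (LaurentPolynomial k)) q -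
            ((t'⁻¹ : (DualNumber (LaurentPolynomial k))ˣ) :
              DualNumber (LaurentPolynomial k)) ^ (g - 1) *
              Polynomial.aeval ((t'⁻¹ : (DualNumber (LaurentPolynomial k))ˣ) :
                DualNumber (LaurentPolynomial k)) p) * DualNumber.eps) = 1 := by
  set t := tUnit k
  have hε : (ε : k[T;T⁻¹][ε]) * ε = 0 := eps_mul_eps
  have ht'ε : (t' : k[T;T⁻¹][ε]) * ε = (t : k[T;T⁻¹][ε]) * ε := by
    linear_combination (-ε) * ht - aeval (t : k[T;T⁻¹][ε]) q * hε
  have hFε := laurentEval_mul_eps ht'ε F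
  set τ : k[T;T⁻¹][ε] := ↑t⁻¹
  have hsε : s * ε = τ * ε := by
    linear_combination (τ * ε) * hs - (s * inl F * τ) * hε - (s * ε) * t.mul_inv
  have hpε := aeval_mul_eps_congr hsε p
  have hqε := aeval_mul_eps_congr ht'ε q
  have hp'ε :
      (↑t'⁻¹ : k[T;T⁻¹][ε]) ^ (g - 1) * aeval (↑t'⁻¹ : k[T;T⁻¹][ε]) p * ε =
        τ ^ (g - 1) * aeval τ p * ε := by
    have h := aeval_mul_eps_congr (Units.inv_mul_eq_inv_mul_of_mul_eq_mul ht'ε)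
      (X ^ (g - 1) * p)
    rwa [map_mul, map_pow, aeval_X, map_mul, map_pow, aeval_X] at h
  have hτ : τ * τ ^ (g - 1) = τ ^ g := by rw [← pow_succ', Nat.sub_add_cancel (by omega)]
  have hY : (t' : k[T;T⁻¹][ε]) + (laurentEval t' F + aeval (t' : k[T;T⁻¹][ε]) q -
      (↑t'⁻¹ : k[T;T⁻¹][ε]) ^ (g - 1) * aeval (↑t'⁻¹ : k[T;T⁻¹][ε]) p) * ε =
      (t : k[T;T⁻¹][ε]) + inl F * ε - τ ^ (g - 1) * aeval τ p * ε := by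
    linear_combination hFε + hqε - hp'ε - ht
  rw [hY]
  linear_combination hs + aeval s p * τ ^ (g + 1) * (inl F - τ ^ (g - 1) * aeval τ p) * hε
    - τ ^ (g - 1) * aeval τ p * hsε + τ ^ (g + 1) * t * hpε
    + τ ^ g * aeval τ p * ε * t.mul_inv - aeval τ p * ε * hτ

/-- in `k[t,t⁻¹,η]/(η²)`, for a ribbon with gluing data
`s⁻¹ = t + F(t)η`, `ε = t^{-g-1}η`, the change of coordinates
`s' = s + p(s)ε`, `t = t' + q(t)η` produces the new gluing relation
`s'⁻¹ = t' + (F(t') + q(t') - t'^{1-g} p(t'⁻¹))η`. -/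
theorem stmt_10 {k : Type*} [Field k] [CharZero k] (g : ℕ) (hg : 3 ≤ g)
    (F : LaurentPolynomial k) (p q : Polynomial k)
    (s : DualNumber (LaurentPolynomial k)) (t' : (DualNumber (LaurentPolynomial k))ˣ)
    -- `s⁻¹ = t + F(t)η`
    (hs : s * ((tUnit k : DualNumber (LaurentPolynomial k)) + inl F * DualNumber.eps) = 1)
    -- `t = t' + q(t)η`
    (ht : (tUnit k : DualNumber (LaurentPolynomial k)) =
      (t' : DualNumber (LaurentPolynomial k)) +
        Polynomial.aeval (tUnit k : DualNumber (LaurentPolynomial k)) q * DualNumber.eps) :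
    -- with `s' = s + p(s)ε` and `ε = t^{-g-1}η`:
    (s + Polynomial.aeval s p *
        ((((tUnit k)⁻¹ : (DualNumber (LaurentPolynomial k))ˣ) :
          DualNumber (LaurentPolynomial k)) ^ (g + 1) * DualNumber.eps)) *
      ((t' : DualNumber (LaurentPolynomial k)) +
        (laurentEval t' F + Polynomial.aeval (t' : DualNumber (LaurentPolynomial k)) q -
            ((t'⁻¹ : (DualNumber (LaurentPolynomial k))ˣ) :
              DualNumber (LaurentPolynomial k)) ^ (g - 1) *
              Polynomial.aeval ((t'⁻¹ : (DualNumber (LaurentPolynomial k))ˣ) :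
                DualNumber (LaurentPolynomial k)) p) * DualNumber.eps) = 1 :=
  stmt_10_general g hg F p q s t' hs ht
end
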